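/- arXiv:2109.04071 — 4 statements merged into one kernel-verified Lean document; each statement's English description precedes it below -/
import Mathlib

section
/- Let A and B be n×n complex unitary matrices such that A ⊗ Ā = B ⊗ B̄, where Ā denotes entrywise complex conjugation. Then there exists a complex number λ with |λ| = 1 such that B = λ A. -/
open Matrix ComplexConjugate

/-! The hypothesis says that the rank-one tensors `A ⊗ Ā` and `B ⊗ B̄` coincide. Fixing an entry
`A i₀ j₀ ≠ 0` (a unitary matrix is nonzero), the diagonal instance gives `|A i₀ j₀| = |B i₀ j₀|`,
and the instances with second index `(i₀, j₀)` give `B = λ A` with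
`λ = conj (A i₀ j₀) / conj (B i₀ j₀)`, a complex number of modulus one. -/

theorem exists_norm_eq_one_smul_of_mul_conj_eq {𝕜 ι : Type*} [RCLike 𝕜] {f g : ι → 𝕜}
    (hf : f ≠ 0) (h : ∀ x y, f x * conj (f y) = g x * conj (g y)) :
    ∃ c : 𝕜, ‖c‖ = 1 ∧ g = c • f := by
  obtain ⟨y, hfy⟩ := Function.ne_iff.mp hf
  have hnorm : ‖g y‖ = ‖f y‖ := by
    have hsq := congrArg (‖·‖) (h y y)
    simp only [norm_mul, RCLike.norm_conj, ← sq] at hsq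
    exact ((pow_left_inj₀ (norm_nonneg _) (norm_nonneg _) two_ne_zero).mp hsq).symm
  have hgy : g y ≠ 0 := norm_ne_zero_iff.mp (hnorm ▸ norm_ne_zero_iff.mpr hfy)
  refine ⟨conj (f y) / conj (g y), ?_, ?_⟩
  · rw [norm_div, RCLike.norm_conj, RCLike.norm_conj, hnorm, div_self (norm_ne_zero_iff.mpr hfy)]
  · funext x
    rw [Pi.smul_apply, smul_eq_mul, div_mul_eq_mul_div, mul_comm, h x y,
      mul_div_assoc, div_self ((map_ne_zero _).mpr hgy), mul_one]

theorem exists_phase_of_kronecker_conj_eq_general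
    (n : ℕ) (hn : 0 < n) (A B : Matrix (Fin n) (Fin n) ℂ)
    (hA₂ : Aᴴ * A = 1)
    (h : ∀ i k j l, A i j * (starRingEnd ℂ) (A k l) = B i j * (starRingEnd ℂ) (B k l)) :
    ∃ lam : ℂ, ‖lam‖ = 1 ∧ B = lam • A := by
  have : Nonempty (Fin n) := ⟨⟨0, hn⟩⟩
  have hA : Function.uncurry A ≠ 0 := by
    intro hA0
    have : A = 0 := funext fun i ↦ funext fun j ↦ congrFun hA0 (i, j)
    simp [this] at hA₂
  obtain ⟨lam, hlam, hBA⟩ :=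
    exists_norm_eq_one_smul_of_mul_conj_eq hA fun x y ↦ h x.1 y.1 x.2 y.2
  exact ⟨lam, hlam, funext fun i ↦ funext fun j ↦ congrFun hBA (i, j)⟩

/-- Two complex unitary matrices with `A ⊗ Ā = B ⊗ B̄` agree up to a
phase `λ` with `|λ| = 1`. -/
theorem exists_phase_of_kronecker_conj_eq
    (n : ℕ) (hn : 0 < n) (A B : Matrix (Fin n) (Fin n) ℂ)
    (hA₁ : A * Aᴴ = 1) (hA₂ : Aᴴ * A = 1)
    (hB₁ : B * Bᴴ = 1) (hB₂ : Bᴴ * B = 1)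
    (h : ∀ i k j l, A i j * (starRingEnd ℂ) (A k l) = B i j * (starRingEnd ℂ) (B k l)) :
    ∃ lam : ℂ, ‖lam‖ = 1 ∧ B = lam • A :=
  exists_phase_of_kronecker_conj_eq_general n hn A B hA₂ h
end

section
/- Let 𝒜 be a unital *-algebra over ℂ and let u = (u^i_j) be an n×n matrix of elements of 𝒜 such that both u and ū (the entrywise adjoint matrix, ū^i_j = (u^i_j)*) are unitary, i.e. ∑_k u^i_k (u^j_k)* = δ_{ij}, ∑_k (u^k_i)* u^k_j = δ_{ij}, ∑_k (u^i_k)* u^j_k = δ_{ij}, ∑_k u^k_i (u^k_j)* = δ_{ij} (the defining relations of U_n^+). Define v^{ik}_{jl} := u^i_j (u^k_l)*. Then v satisfies the PO_n^+ relations: (1) (v^{ik}_{jl})* = v^{ki}_{lj}; (2) ∑_k v^{ij}_{kk} = δ_{ij}·1; (3) ∑_k v^{ai}_{bk} v^{jc}_{kd} = δ_{ij} v^{ac}_{bd}. -/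
/-- If `u` satisfies the defining relations of `U_n⁺` in a unital
`*`-algebra (`u` and `ū` unitary), then `v (i,k) (j,l) = u i j * (u k l)⋆`
satisfies the `PO_n⁺` relations. -/
theorem PO_relations_of_Un_plus
    {𝒜 : Type*} [Ring 𝒜] [StarRing 𝒜] [Algebra ℂ 𝒜]
    (n : ℕ) (hn : 0 < n) (u : Fin n → Fin n → 𝒜)
    (h₁ : ∀ i j, ∑ k, u i k * star (u j k) = if i = j then (1 : 𝒜) else 0)
    (h₂ : ∀ i j, ∑ k, star (u k i) * u k j = if i = j then (1 : 𝒜) else 0)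
    (h₃ : ∀ i j, ∑ k, star (u i k) * u j k = if i = j then (1 : 𝒜) else 0)
    (h₄ : ∀ i j, ∑ k, u k i * star (u k j) = if i = j then (1 : 𝒜) else 0)
    (v : Fin n × Fin n → Fin n × Fin n → 𝒜)
    (hv : ∀ i k j l, v (i, k) (j, l) = u i j * star (u k l)) :
    (∀ i k j l, star (v (i, k) (j, l)) = v (k, i) (l, j)) ∧
    (∀ i j, ∑ k, v (i, j) (k, k) = if i = j then (1 : 𝒜) else 0) ∧
    (∀ a b c d i j, ∑ k, v (a, i) (b, k) * v (j, c) (k, d) =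
      (if i = j then (1 : 𝒜) else 0) * v (a, c) (b, d)) := by
  refine ⟨fun i k j l => ?_, fun i j => ?_, fun a b c d i j => ?_⟩
  · simp [hv, star_mul]
  · simp only [hv]
    exact h₁ i j
  · simp only [hv]
    have : ∑ k, u a b * star (u i k) * (u j k * star (u c d))
        = u a b * (∑ k, star (u i k) * u j k) * star (u c d) := by
      rw [Finset.mul_sum, Finset.sum_mul]
      apply Finset.sum_congr rfl
      intro k _
      noncomm_ring
    rw [this, h₃]
    by_cases h : i = j <;> simp [h, mul_assoc]
end

section
/- For a non-crossing partition p of {1,…,k} and a natural number n ≥ 1, define the tensor T_p ∈ (ℂⁿ)^{⊗k} with coordinates (T_p)_{i_1,…,i_k} = 1 if the index function j ↦ i_j is constant on every block of p, and 0 otherwise. Then for two non-crossing partitions p, q of {1,…,k}, the inner product ⟨T_p, T_q⟩ equals n^{#bl(p ∨ q)}, where p ∨ q is the join (the finest partition coarser than both p and q) and #bl denotes the number of blocks. -/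
open Classical

/-- A set partition (given as a setoid) of a linearly ordered type is non-crossing. -/
def IsNonCrossing {α : Type*} [LinearOrder α] (p : Setoid α) : Prop :=
  ∀ a b c d : α, a < b → b < c → c < d → p a c → p b d → p a b

/-- The delta tensor of a partition: coordinate `1` at a multi-index iff the index
function is constant on every block. -/
noncomputable def deltaTensor {k n : ℕ} (p : Setoid (Fin k)) (i : Fin k → Fin n) : ℂ :=
  if ∀ a b : Fin k, p a b → i a = i b then 1 else 0

/-- for non-crossing partitions `p, q` of `{1,…,k}`, the inner product of
the delta tensors `T_p, T_q ∈ (ℂⁿ)^{⊗k}` equals `n ^ #bl(p ⊔ q)`, where `p ⊔ q` is the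
join in the lattice of all partitions of `Fin k`. -/
theorem inner_deltaTensor_eq_pow_card_blocks_sup
    (k n : ℕ) (hn : 1 ≤ n) (p q : Setoid (Fin k))
    (hp : IsNonCrossing p) (hq : IsNonCrossing q) :
    ∑ i : Fin k → Fin n, (starRingEnd ℂ) (deltaTensor p i) * deltaTensor q i
      = (n : ℂ) ^ Nat.card (Quotient (p ⊔ q)) := by
  classical
  have key : ∀ i : Fin k → Fin n,
      ((∀ a b, p a b → i a = i b) ∧ (∀ a b, q a b → i a = i b)) ↔
        (∀ a b, (p ⊔ q) a b → i a = i b) := by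
    intro i
    constructor
    · rintro ⟨h1, h2⟩ a b hab
      rw [Setoid.sup_eq_eqvGen] at hab
      induction hab with
      | rel x y h => exact h.elim (h1 x y) (h2 x y)
      | refl x => rfl
      | symm x y _ ih => exact ih.symm
      | trans x y z _ _ ih1 ih2 => exact ih1.trans ih2
    · intro h
      exact ⟨fun a b hab => h a b (le_sup_left (a := p) (b := q) hab),
             fun a b hab => h a b (le_sup_right (a := p) (b := q) hab)⟩
  have step : ∀ i : Fin k → Fin n,
      (starRingEnd ℂ) (deltaTensor p i) * deltaTensor q i
        = if (∀ a b, (p ⊔ q) a b → i a = i b) then (1 : ℂ) else 0 := by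
    intro i
    by_cases h : ∀ a b, (p ⊔ q) a b → i a = i b
    · simp only [deltaTensor, if_pos ((key i).2 h).1, if_pos ((key i).2 h).2,
        if_pos h, map_one, one_mul]
    · rw [if_neg h]
      by_cases h1 : ∀ a b, p a b → i a = i b
      · by_cases h2 : ∀ a b, q a b → i a = i b
        · exact absurd ((key i).1 ⟨h1, h2⟩) h
        · simp [deltaTensor, h2]
      · simp [deltaTensor, h1]
  rw [Finset.sum_congr rfl fun i _ => step i, Finset.sum_boole]
  have hcard : (Finset.univ.filter
      (fun i : Fin k → Fin n => ∀ a b, (p ⊔ q) a b → i a = i b)).card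
      = n ^ Nat.card (Quotient (p ⊔ q)) := by
    rw [← Fintype.card_subtype]
    rw [← Nat.card_eq_fintype_card]
    have e : {i : Fin k → Fin n // ∀ a b, (p ⊔ q) a b → i a = i b}
        ≃ (Quotient (p ⊔ q) → Fin n) :=
      { toFun := fun x => Quotient.lift x.1 (fun a b hab => x.2 a b hab)
        invFun := fun g => ⟨fun a => g (Quotient.mk _ a),
          fun a b hab => congrArg g (Quotient.sound hab)⟩
        left_inv := fun x => by ext a; rfl
        right_inv := fun g => by
          ext x
          induction x using Quotient.inductionOn with
          | h a => rfl }
    rw [Nat.card_congr e, Nat.card_fun, Nat.card_eq_fintype_card (α := Fin n),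
      Fintype.card_fin]
  rw [hcard]
  push_cast
  ring
end

section
/- Let p be a partition of {1,…,k} ⊔ {1,…,l} (k upper, l lower points) and q a partition of {1,…,l} ⊔ {1,…,m}. For n ≥ 1 define the linear map T_p : (ℂⁿ)^{⊗k} → (ℂⁿ)^{⊗l} by (T_p)^{i_1…i_l}_{j_1…j_k} = 1 if the combined index function is constant on every block of p and 0 otherwise, and similarly T_q. Then T_q ∘ T_p = n^{c(q,p)} · T_{q·p}, where q·p is the partition obtained by placing q below p and identifying the l middle points, and c(q,p) is the number of connected components of this composite diagram that contain only middle points (blocks removed in the composition). -/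
open Classical Matrix

section PartitionCalculus

variable {k l m : ℕ}

/-- Gluing the lower row of `p` (partition of `k` upper, `l` lower points) to the upper
row of `q` (partition of `l` upper, `m` lower points): the equivalence relation on all
`k + l + m` points generated by the blocks of `p` and of `q`. -/
noncomputable def glue (p : Setoid (Fin k ⊕ Fin l)) (q : Setoid (Fin l ⊕ Fin m)) :
    Setoid (Fin k ⊕ (Fin l ⊕ Fin m)) :=
  Relation.EqvGen.setoid (fun x y =>
    (∃ a b, p a b ∧ x = Sum.map id Sum.inl a ∧ y = Sum.map id Sum.inl b) ∨
    (∃ a b, q a b ∧ x = Sum.inr a ∧ y = Sum.inr b))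

/-- The composite partition `q·p` on the `k` upper and `m` lower outer points: two outer
points are in the same block iff they are connected through blocks of `p` and `q` via
the middle points. -/
noncomputable def partComp (q : Setoid (Fin l ⊕ Fin m)) (p : Setoid (Fin k ⊕ Fin l)) :
    Setoid (Fin k ⊕ Fin m) :=
  Setoid.comap (Sum.map id Sum.inr) (glue p q)

/-- The number `c(q,p)` of connected components of the glued diagram consisting only of
middle points (the blocks removed in the composition). -/
noncomputable def closedBlocks (q : Setoid (Fin l ⊕ Fin m)) (p : Setoid (Fin k ⊕ Fin l)) : ℕ :=
  Nat.card {c : Quotient (glue p q) //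
    ∀ x, Quotient.mk (glue p q) x = c → ∃ a : Fin l, x = Sum.inr (Sum.inl a)}

/-- The partition tensor `T_p : (ℂⁿ)^{⊗k} → (ℂⁿ)^{⊗l}` as a matrix of `0`s and `1`s:
the `(j, i)` entry is `1` iff the combined index `Sum.elim i j` is constant on every
block of `p`. -/
noncomputable def partMatrix (n : ℕ) (p : Setoid (Fin k ⊕ Fin l)) :
    Matrix (Fin l → Fin n) (Fin k → Fin n) ℂ :=
  fun j i => if ∀ x y, p x y → Sum.elim i j x = Sum.elim i j y then 1 else 0

end PartitionCalculus

namespace PartProof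

variable {k l m n : ℕ}

/-- Embedding of outer points into the glued diagram. -/
abbrev O : Fin k ⊕ Fin m → Fin k ⊕ (Fin l ⊕ Fin m) := Sum.map id Sum.inr

/-- The combined index function on the glued diagram. -/
def G (i : Fin k → Fin n) (r : Fin m → Fin n) (j : Fin l → Fin n) :
    Fin k ⊕ (Fin l ⊕ Fin m) → Fin n :=
  Sum.elim i (Sum.elim j r)

lemma G_O (i : Fin k → Fin n) (r : Fin m → Fin n) (j : Fin l → Fin n)
    (w : Fin k ⊕ Fin m) : G i r j (O (l := l) w) = Sum.elim i r w := by
  cases w <;> rfl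

lemma G_mapinl (i : Fin k → Fin n) (r : Fin m → Fin n) (j : Fin l → Fin n)
    (a : Fin k ⊕ Fin l) : G i r j (Sum.map id Sum.inl a) = Sum.elim i j a := by
  cases a <;> rfl

variable (p : Setoid (Fin k ⊕ Fin l)) (q : Setoid (Fin l ⊕ Fin m))
  (i : Fin k → Fin n) (r : Fin m → Fin n)

/-- `j` is a compatible middle index. -/
def Sgood (j : Fin l → Fin n) : Prop :=
  ∀ x y, (glue p q) x y → G i r j x = G i r j y

lemma claimA (j : Fin l → Fin n) :
    ((∀ x y, q x y → Sum.elim j r x = Sum.elim j r y) ∧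
     (∀ x y, p x y → Sum.elim i j x = Sum.elim i j y)) ↔ Sgood p q i r j := by
  constructor
  · rintro ⟨hq, hp⟩ x y hxy
    have hxy' : Relation.EqvGen (fun x y =>
        (∃ a b, p a b ∧ x = Sum.map id Sum.inl a ∧ y = Sum.map id Sum.inl b) ∨
        (∃ a b, q a b ∧ x = Sum.inr a ∧ y = Sum.inr b)) x y := hxy
    clear hxy
    induction hxy' with
    | rel x y h =>
        rcases h with ⟨a, b, hab, rfl, rfl⟩ | ⟨a, b, hab, rfl, rfl⟩
        · rw [G_mapinl, G_mapinl]; exact hp a b hab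
        · exact hq a b hab
    | refl => rfl
    | symm _ _ _ ih => exact ih.symm
    | trans _ _ _ _ _ ih1 ih2 => exact ih1.trans ih2
  · intro h
    constructor
    · intro x y hxy
      exact h _ _ (Relation.EqvGen.rel _ _ (Or.inr ⟨x, y, hxy, rfl, rfl⟩))
    · intro x y hxy
      have := h _ _ (Relation.EqvGen.rel _ _ (Or.inl ⟨x, y, hxy, rfl, rfl⟩))
      rwa [G_mapinl, G_mapinl] at this

/-- A block of the glued diagram consists only of middle points. -/
def Closed (c : Quotient (glue p q)) : Prop :=
  ∀ x, Quotient.mk (glue p q) x = c → ∃ a : Fin l, x = Sum.inr (Sum.inl a)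

lemma closedBlocks_eq : closedBlocks q p = Nat.card {c // Closed p q c} := rfl

lemma not_closed_O (w : Fin k ⊕ Fin m) :
    ¬ Closed p q (Quotient.mk (glue p q) (O w)) := by
  intro h
  obtain ⟨a, ha⟩ := h _ rfl
  cases w <;> simp [O] at ha

lemma exists_outer (c : Quotient (glue p q)) (hc : ¬ Closed p q c) :
    ∃ w : Fin k ⊕ Fin m, Quotient.mk (glue p q) (O w) = c := by
  unfold Closed at hc
  push_neg at hc
  obtain ⟨x, hx, hna⟩ := hc
  match x with
  | Sum.inl a => exact ⟨Sum.inl a, hx⟩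
  | Sum.inr (Sum.inl t) => exact absurd rfl (hna t)
  | Sum.inr (Sum.inr b) => exact ⟨Sum.inr b, hx⟩

/-- Value assigned to a glued block, given free values `g` on the closed blocks. -/
noncomputable def val (g : {c // Closed p q c} → Fin n)
    (c : Quotient (glue p q)) : Fin n :=
  if h : Closed p q c then g ⟨c, h⟩
  else Sum.elim i r (exists_outer p q c h).choose

/-- The middle index built from `g`. -/
noncomputable def jOf (g : {c // Closed p q c} → Fin n) : Fin l → Fin n :=
  fun t => val p q i r g (Quotient.mk (glue p q) (Sum.inr (Sum.inl t)))

lemma val_O (H : ∀ x y, (partComp q p) x y → Sum.elim i r x = Sum.elim i r y)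
    (g : {c // Closed p q c} → Fin n) (w : Fin k ⊕ Fin m) :
    val p q i r g (Quotient.mk (glue p q) (O w)) = Sum.elim i r w := by
  rw [val, dif_neg (not_closed_O p q w)]
  have hs := (exists_outer p q _ (not_closed_O p q w)).choose_spec
  have hrel : (glue p q) (O (exists_outer p q _ (not_closed_O p q w)).choose) (O w) :=
    Quotient.exact hs
  exact H _ _ ((Setoid.comap_rel _ _ _ _).mpr hrel)

lemma key (H : ∀ x y, (partComp q p) x y → Sum.elim i r x = Sum.elim i r y)
    (g : {c // Closed p q c} → Fin n) (x : Fin k ⊕ (Fin l ⊕ Fin m)) :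
    G i r (jOf p q i r g) x = val p q i r g (Quotient.mk (glue p q) x) := by
  match x with
  | Sum.inl a => exact (val_O p q i r H g (Sum.inl a)).symm
  | Sum.inr (Sum.inl t) => rfl
  | Sum.inr (Sum.inr b) => exact (val_O p q i r H g (Sum.inr b)).symm

lemma jOf_mem (H : ∀ x y, (partComp q p) x y → Sum.elim i r x = Sum.elim i r y)
    (g : {c // Closed p q c} → Fin n) : Sgood p q i r (jOf p q i r g) := by
  intro x y hxy
  rw [key p q i r H g, key p q i r H g, Quotient.sound hxy]

/-- The bijection between compatible middle indices and free values on closed blocks. -/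
noncomputable def theEquiv
    (H : ∀ x y, (partComp q p) x y → Sum.elim i r x = Sum.elim i r y) :
    {j : Fin l → Fin n // Sgood p q i r j} ≃ ({c // Closed p q c} → Fin n) where
  toFun j c := G i r j.val c.val.out
  invFun g := ⟨jOf p q i r g, jOf_mem p q i r H g⟩
  left_inv := by
    rintro ⟨j, hj⟩
    apply Subtype.ext
    funext t
    show val p q i r (fun c => G i r j c.val.out)
      (Quotient.mk (glue p q) (Sum.inr (Sum.inl t))) = j t
    by_cases h : Closed p q (Quotient.mk (glue p q) (Sum.inr (Sum.inl t)))
    · rw [val, dif_pos h]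
      have hrel : (glue p q) ((Quotient.mk (glue p q) (Sum.inr (Sum.inl t))).out)
          (Sum.inr (Sum.inl t)) := Quotient.exact (Quotient.out_eq _)
      exact hj _ _ hrel
    · rw [val, dif_neg h]
      have hs := (exists_outer p q _ h).choose_spec
      have hrel : (glue p q) (O (exists_outer p q _ h).choose) (Sum.inr (Sum.inl t)) :=
        Quotient.exact hs
      have := hj _ _ hrel
      rwa [G_O] at this
  right_inv := by
    intro g
    funext c
    show G i r (jOf p q i r g) c.1.out = g c
    rw [key p q i r H g, Quotient.out_eq, val, dif_pos c.2]

lemma card_good_pos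
    (H : ∀ x y, (partComp q p) x y → Sum.elim i r x = Sum.elim i r y) :
    Nat.card {j : Fin l → Fin n // Sgood p q i r j} = n ^ closedBlocks q p := by
  rw [Nat.card_congr (theEquiv p q i r H), Nat.card_fun,
    Nat.card_eq_fintype_card (α := Fin n), Fintype.card_fin, closedBlocks_eq]

lemma card_good_neg (H : ¬ ∀ x y, (partComp q p) x y → Sum.elim i r x = Sum.elim i r y) :
    Nat.card {j : Fin l → Fin n // Sgood p q i r j} = 0 := by
  rw [Nat.card_eq_zero]
  left
  constructor
  rintro ⟨j, hj⟩
  apply H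
  intro x y hxy
  have := hj (O x) (O y) hxy
  rwa [G_O, G_O] at this

end PartProof

/-- composition rule for partition tensors:
`T_q ∘ T_p = n^{c(q,p)} · T_{q·p}`. -/
theorem partMatrix_mul (k l m n : ℕ) (hn : 1 ≤ n)
    (p : Setoid (Fin k ⊕ Fin l)) (q : Setoid (Fin l ⊕ Fin m)) :
    partMatrix n q * partMatrix n p
      = ((n : ℂ) ^ closedBlocks q p) • partMatrix n (partComp q p) := by
  ext r i
  rw [Matrix.mul_apply]
  have step : ∀ j : Fin l → Fin n,
      partMatrix n q r j * partMatrix n p j i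
        = if PartProof.Sgood p q i r j then (1 : ℂ) else 0 := by
    intro j
    rw [partMatrix, partMatrix, ite_zero_mul_ite_zero, one_mul]
    exact if_congr (PartProof.claimA p q i r j) rfl rfl
  simp only [step]
  rw [Finset.sum_boole]
  have hcard : (Finset.univ.filter (fun j => PartProof.Sgood p q i r j)).card
      = Nat.card {j : Fin l → Fin n // PartProof.Sgood p q i r j} := by
    rw [Nat.card_eq_fintype_card, Fintype.card_subtype]
  rw [hcard]
  rw [Matrix.smul_apply, partMatrix, smul_eq_mul]
  by_cases H : ∀ x y, (partComp q p) x y → Sum.elim i r x = Sum.elim i r y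
  · rw [PartProof.card_good_pos p q i r H, if_pos H, mul_one]
    push_cast
    ring
  · rw [PartProof.card_good_neg p q i r H, if_neg H, mul_zero]
    norm_num
end
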